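/- arXiv:0802.3535 — 3 statements merged into one kernel-verified Lean document; each statement's English description precedes it below -/
import Mathlib

section
/- Let n ≥ 1 and P > 0, and let λ₁,…,λₙ and Q₁,…,Qₙ be nonnegative reals with ∑ᵢ Qᵢ = nP. Then ∑ᵢ log₂(1 + Qᵢλᵢ) - ∑ᵢ log₂(1 + Pλᵢ) ≤ n. -/
open Real Finset

lemma term_gap (P Q lam : ℝ) (hP : 0 < P) (hQ : 0 ≤ Q) (hlam : 0 ≤ lam) :
    Real.logb 2 (1 + Q * lam) - Real.logb 2 (1 + P * lam) ≤ Real.logb 2 (1 + Q / P) := by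
  have h1 : (0:ℝ) < 1 + Q * lam := by positivity
  have h2 : (0:ℝ) < 1 + P * lam := by positivity
  have h3 : (0:ℝ) < 1 + Q / P := by positivity
  have key : 1 + Q * lam ≤ (1 + Q / P) * (1 + P * lam) := by
    have hqp : (Q / P) * (P * lam) = Q * lam := by field_simp
    have hd : 0 ≤ Q / P := div_nonneg hQ hP.le
    have hpl : 0 ≤ P * lam := mul_nonneg hP.le hlam
    nlinarith
  have h4 := (Real.logb_le_logb (b := 2) (by norm_num) h1 ((mul_pos h3 h2))).mpr key
  rw [Real.logb_mul (ne_of_gt h3) (ne_of_gt h2)] at h4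
  linarith

/-- Beam-forming gap: waterfilling exceeds equal power allocation by at most `n` bits. -/
theorem waterfilling_gap (n : ℕ) (hn : 1 ≤ n) (P : ℝ) (hP : 0 < P)
    (lam Q : Fin n → ℝ) (hlam : ∀ i, 0 ≤ lam i) (hQ : ∀ i, 0 ≤ Q i)
    (hsum : ∑ i, Q i = n * P) :
    (∑ i, Real.logb 2 (1 + Q i * lam i)) - (∑ i, Real.logb 2 (1 + P * lam i)) ≤ n := by
  have hn0 : (0:ℝ) < n := by exact_mod_cast hn
  set z : Fin n → ℝ := fun i => 1 + Q i / P with hz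
  have hz1 : ∀ i, (1:ℝ) ≤ z i := fun i => by
    have := div_nonneg (hQ i) hP.le; simp [hz]; linarith
  have hzpos : ∀ i, (0:ℝ) < z i := fun i => lt_of_lt_of_le one_pos (hz1 i)
  -- Step 1: pointwise bound
  have step1 : (∑ i, Real.logb 2 (1 + Q i * lam i)) - (∑ i, Real.logb 2 (1 + P * lam i))
      ≤ ∑ i, Real.logb 2 (z i) := by
    rw [← Finset.sum_sub_distrib]
    exact Finset.sum_le_sum fun i _ => term_gap P (Q i) (lam i) hP (hQ i) (hlam i)
  -- Step 2: AM-GM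
  have amgm : ∏ i, (z i) ^ ((n:ℝ)⁻¹) ≤ ∑ i : Fin n, (n:ℝ)⁻¹ * z i :=
    Real.geom_mean_le_arith_mean_weighted Finset.univ (fun _ => (n:ℝ)⁻¹) z
      (fun i _ => by positivity) (by simp; field_simp) (fun i _ => (hzpos i).le)
  have hsum2 : ∑ i : Fin n, (n:ℝ)⁻¹ * z i = 2 := by
    rw [← Finset.mul_sum]
    have : ∑ i, z i = n + (∑ i, Q i) / P := by
      simp [hz, Finset.sum_add_distrib, Finset.sum_div]
    rw [this, hsum]
    field_simp
    ring
  have hprodpos : (0:ℝ) < ∏ i, (z i) ^ ((n:ℝ)⁻¹) :=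
    Finset.prod_pos fun i _ => Real.rpow_pos_of_pos (hzpos i) _
  have step2 : Real.logb 2 (∏ i, (z i) ^ ((n:ℝ)⁻¹)) ≤ 1 := by
    have h5 := (Real.logb_le_logb (b := 2) (by norm_num) hprodpos (by norm_num)).mpr
      (hsum2 ▸ amgm)
    simpa using h5
  have hlogprod : Real.logb 2 (∏ i, (z i) ^ ((n:ℝ)⁻¹))
      = (n:ℝ)⁻¹ * ∑ i, Real.logb 2 (z i) := by
    rw [Real.logb_prod _ _ (fun i _ => ne_of_gt (Real.rpow_pos_of_pos (hzpos i) _))]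
    rw [Finset.mul_sum]
    refine Finset.sum_congr rfl fun i _ => ?_
    rw [Real.logb_rpow_eq_mul_logb_of_pos (hzpos i)]
  have : (n:ℝ)⁻¹ * ∑ i, Real.logb 2 (z i) ≤ 1 := hlogprod ▸ step2
  have hsumz : ∑ i, Real.logb 2 (z i) ≤ n := by
    rw [inv_mul_le_iff₀ hn0] at this
    simpa using this
  linarith
end

section
/- Let f : Finset V → ℝ be a submodular function on subsets of a finite set V (i.e., f(A ∪ B) + f(A ∩ B) ≤ f(A) + f(B) for all A, B). For subsets W₁,…,W_l of V and 1 ≤ r ≤ l, define W̃_r = ⋃_{S ⊆ {1,…,l}, |S| = r} ⋂_{i ∈ S} W_i. Then ∑_{i=1}^l f(W_i) ≥ ∑_{r=1}^l f(W̃_r). -/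
/-- Elements belonging to at least `r` of the sets `W 1, …, W l`. -/
def atLeastIn {V : Type*} [Fintype V] [DecidableEq V] {l : ℕ}
    (W : Fin l → Finset V) (r : ℕ) : Finset V :=
  Finset.univ.filter (fun v => r ≤ (Finset.univ.filter (fun i => v ∈ W i)).card)

/-!
Peel off the last set `B = W l`. An element lies in at least `r + 1` of the `l + 1` sets iff it
lies in at least `r + 1` of the first `l`, or in at least `r` of them and in `B`; so with
`T r = atLeastIn (Fin.init W) r` the new level sets are `T (r + 1) ∪ (T r ∩ B)`. Along the chain
`T 0 ⊇ T 1 ⊇ ⋯`, submodularity applied to `T (r + 1)` and `T r ∩ B` trades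
`f (T (r + 1)) + f (T r ∩ B)` for `f (T (r + 1) ∪ (T r ∩ B)) + f (T (r + 1) ∩ B)`, and these
inequalities telescope from `T 0 ∩ B = B` down to `T (l + 1) ∩ B = ∅`. Induction on `l` finishes.
-/

open Finset

section Lattice

variable {α M : Type*} [Lattice α] [AddCommMonoid M] [PartialOrder M] [IsOrderedCancelAddMonoid M]

theorem sum_sup_inf_chain_le (f : α → M) (hf : ∀ a b, f (a ⊔ b) + f (a ⊓ b) ≤ f a + f b)
    {T : ℕ → α} (hT : Antitone T) (b : α) (n : ℕ) :
    ∑ r ∈ range n, f (T (r + 1) ⊔ (T r ⊓ b)) + f (T n ⊓ b)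
      ≤ ∑ r ∈ range n, f (T (r + 1)) + f (T 0 ⊓ b) := by
  induction n with
  | zero => simp
  | succ n ih =>
    have hinf : T (n + 1) ⊓ (T n ⊓ b) = T (n + 1) ⊓ b := by
      rw [← inf_assoc, inf_eq_left.mpr (hT n.le_succ)]
    have hstep := hf (T (n + 1)) (T n ⊓ b)
    rw [hinf] at hstep
    refine le_of_add_le_add_right (a := f (T n ⊓ b)) ?_
    calc _ = (∑ r ∈ range n, f (T (r + 1) ⊔ (T r ⊓ b)) + f (T n ⊓ b))
            + (f (T (n + 1) ⊔ (T n ⊓ b)) + f (T (n + 1) ⊓ b)) := by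
          rw [sum_range_succ]; abel
      _ ≤ (∑ r ∈ range n, f (T (r + 1)) + f (T 0 ⊓ b)) + (f (T (n + 1)) + f (T n ⊓ b)) :=
          add_le_add ih hstep
      _ = _ := by rw [sum_range_succ]; abel

end Lattice

section AtLeastIn

variable {V : Type*} [Fintype V] [DecidableEq V]

theorem atLeastIn_zero {l : ℕ} (W : Fin l → Finset V) : atLeastIn W 0 = univ := by
  simp [atLeastIn]

theorem atLeastIn_antitone {l : ℕ} (W : Fin l → Finset V) : Antitone (atLeastIn W) :=
  fun _ _ hrs _ hv => by
    simp only [atLeastIn, mem_filter, mem_univ, true_and] at hv ⊢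
    omega

theorem atLeastIn_eq_empty {l r : ℕ} (W : Fin l → Finset V) (hr : l < r) :
    atLeastIn W r = ∅ := by
  refine filter_false_of_mem fun v _ => ?_
  have := card_filter_le (univ : Finset (Fin l)) (fun i => v ∈ W i)
  rw [card_univ, Fintype.card_fin] at this
  omega

theorem atLeastIn_succ {l : ℕ} (W : Fin (l + 1) → Finset V) (r : ℕ) :
    atLeastIn W (r + 1)
      = atLeastIn (Fin.init W) (r + 1) ∪ (atLeastIn (Fin.init W) r ∩ W (Fin.last l)) := by
  ext v
  have hcount :
      #{i | v ∈ W i} = #{i | v ∈ Fin.init W i} + if v ∈ W (Fin.last l) then 1 else 0 := by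
    rw [card_filter, card_filter, Fin.sum_univ_castSucc]
    rfl
  simp only [atLeastIn, mem_union, mem_inter, mem_filter, mem_univ, true_and, hcount]
  split_ifs with hB
  · simp only [hB, and_true]; omega
  · simp only [hB, and_false, or_false]; omega

theorem sum_range_atLeastIn_le (f : Finset V → ℝ)
    (hf : ∀ A B : Finset V, f (A ∪ B) + f (A ∩ B) ≤ f A + f B) {l : ℕ} (W : Fin l → Finset V) :
    ∑ r ∈ range l, f (atLeastIn W (r + 1)) ≤ ∑ i, f (W i) := by
  induction l with
  | zero => simp
  | succ l ih =>
    have hchain := sum_sup_inf_chain_le f hf (atLeastIn_antitone (Fin.init W)) (W (Fin.last l))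
      (l + 1)
    simp only [sup_eq_union, inf_eq_inter, ← atLeastIn_succ] at hchain
    have htop : atLeastIn (Fin.init W) (l + 1) = ∅ := atLeastIn_eq_empty _ l.lt_succ_self
    rw [sum_range_succ fun r => f (atLeastIn (Fin.init W) (r + 1)), htop, empty_inter,
      atLeastIn_zero, univ_inter] at hchain
    have hinit := ih (Fin.init W)
    rw [Fin.sum_univ_castSucc]
    dsimp only [Fin.init] at hinit
    linarith

end AtLeastIn

/-- k-way submodularity inequality. -/
theorem kway_submodular {V : Type*} [Fintype V] [DecidableEq V]
    (f : Finset V → ℝ)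
    (hf : ∀ A B : Finset V, f (A ∪ B) + f (A ∩ B) ≤ f A + f B)
    (l : ℕ) (W : Fin l → Finset V) :
    ∑ r ∈ Finset.Icc 1 l, f (atLeastIn W r) ≤ ∑ i, f (W i) := by
  rw [← Ico_add_one_right_eq_Icc, ← zero_add 1, ← sum_Ico_add', ← range_eq_Ico]
  exact sum_range_atLeastIn_le f hf W
end

section
/- Let f : Finset V → ℝ satisfy f(A ∪ B) + f(A ∩ B) ≤ f(A) + f(B) for all A, B ⊆ V (submodularity). Then for any A₁, A₂, A₃: f(A₁) + f(A₂) + f(A₃) ≥ f(A₁ ∪ A₂ ∪ A₃) + f((A₁∩A₂) ∪ (A₂∩A₃) ∪ (A₁∩A₃)) + f(A₁ ∩ A₂ ∩ A₃). -/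
/-- The `l = 3` case of the k-way submodularity inequality. -/
theorem three_way_submodular {V : Type*} [DecidableEq V]
    (f : Finset V → ℝ)
    (hf : ∀ A B : Finset V, f (A ∪ B) + f (A ∩ B) ≤ f A + f B)
    (A₁ A₂ A₃ : Finset V) :
    f (A₁ ∪ A₂ ∪ A₃) + f ((A₁ ∩ A₂) ∪ (A₂ ∩ A₃) ∪ (A₁ ∩ A₃)) + f (A₁ ∩ A₂ ∩ A₃) ≤
      f A₁ + f A₂ + f A₃ := by
  have h1 := hf A₁ A₂
  have h2 := hf (A₁ ∪ A₂) A₃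
  have h3 := hf (A₁ ∩ A₂) ((A₁ ∪ A₂) ∩ A₃)
  have e1 : (A₁ ∩ A₂) ∪ ((A₁ ∪ A₂) ∩ A₃) = (A₁ ∩ A₂) ∪ (A₂ ∩ A₃) ∪ (A₁ ∩ A₃) := by
    ext x; simp [Finset.mem_union, Finset.mem_inter]; tauto
  have e2 : (A₁ ∩ A₂) ∩ ((A₁ ∪ A₂) ∩ A₃) = A₁ ∩ A₂ ∩ A₃ := by
    ext x; simp [Finset.mem_union, Finset.mem_inter]; tauto
  rw [e1, e2] at h3
  linarith
end
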